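/- arXiv:2406.06152 — 2 statements merged into one kernel-verified Lean document; each statement's English description precedes it below -/
import Mathlib

section
/- Let S ⊆ ℤ² be a nonempty bounded M♮-convex set. Then the integer points of the convex hull of S (taken in ℝ²) are exactly S, that is, conv(S) ∩ ℤ² = S. -/
open Finset

/-- Embedding of `ℤ²` into `ℝ²`. -/
def toR (x : Fin 2 → ℤ) : Fin 2 → ℝ := fun j => (x j : ℝ)

/-- `chi none = χ₀` is the zero vector, `chi (some i) = χ_i` is the `i`-th unit vector. -/
def chi : Option (Fin 2) → (Fin 2 → ℤ)
  | none => 0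
  | some i => Pi.single i 1

/-- A set `S ⊆ ℤ²` is M♮-convex if for all `x, y ∈ S` and every index `i` with `x^i > y^i`
there exists `j` with `x^j < y^j` or `j = 0` such that `x − χ_i + χ_j ∈ S` and
`y + χ_i − χ_j ∈ S`. -/
def MnConvexSet (S : Set (Fin 2 → ℤ)) : Prop :=
  ∀ x ∈ S, ∀ y ∈ S, ∀ i : Fin 2, y i < x i →
    ∃ j : Option (Fin 2), (∀ j', j = some j' → x j' < y j') ∧
      x - Pi.single i 1 + chi j ∈ S ∧ y + Pi.single i 1 - chi j ∈ S

/-- `T_Φ = { x ∈ ℤ²_{≥0} : x¹ + x² ≤ Φ }`. -/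
def TPhi (Φ : ℤ) : Set (Fin 2 → ℤ) := {x | 0 ≤ x 0 ∧ 0 ≤ x 1 ∧ x 0 + x 1 ≤ Φ}

/-- M♮-concavity of a function on `T_Φ` (exchange property of its extension by `−∞`). -/
def MnConcaveOn (Φ : ℤ) (f : (Fin 2 → ℤ) → ℝ) : Prop :=
  ∀ x ∈ TPhi Φ, ∀ y ∈ TPhi Φ, ∀ i : Fin 2, y i < x i →
    ∃ j : Option (Fin 2), (∀ j', j = some j' → x j' < y j') ∧
      x - Pi.single i 1 + chi j ∈ TPhi Φ ∧ y + Pi.single i 1 - chi j ∈ TPhi Φ ∧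
      f x + f y ≤ f (x - Pi.single i 1 + chi j) + f (y + Pi.single i 1 - chi j)

noncomputable def lam1 (S : Set (Fin 2 → ℤ)) : ℤ := sInf ((fun x => x 0) '' S)
noncomputable def mu1 (S : Set (Fin 2 → ℤ)) : ℤ := sSup ((fun x => x 0) '' S)
noncomputable def lam2 (S : Set (Fin 2 → ℤ)) : ℤ := sInf ((fun x => x 1) '' S)
noncomputable def mu2 (S : Set (Fin 2 → ℤ)) : ℤ := sSup ((fun x => x 1) '' S)
noncomputable def lam0 (S : Set (Fin 2 → ℤ)) : ℤ := sInf ((fun x => x 0 + x 1) '' S)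
noncomputable def mu0 (S : Set (Fin 2 → ℤ)) : ℤ := sSup ((fun x => x 0 + x 1) '' S)

/-- Boundedness of a subset of `ℤ²`. -/
def BoundedSet (S : Set (Fin 2 → ℤ)) : Prop := ∃ M : ℤ, ∀ x ∈ S, |x 0| ≤ M ∧ |x 1| ≤ M

/-- The quantity `ℓ_LH(S) − ℓ_UH(S) = (μ₁ − (λ₀ − λ₂)) − ((μ₀ − μ₂) − λ₁)`;
`S` is of positive-type if it is `> 0`, of zero-type if it equals `0`, and of
negative-type if it is `< 0`. -/
noncomputable def typeQ (S : Set (Fin 2 → ℤ)) : ℤ :=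
  (mu1 S - (lam0 S - lam2 S)) - ((mu0 S - mu2 S) - lam1 S)

/-- `⟨p,x⟩ = p¹x¹ + p²x²`. -/
def inner2 (p : Fin 2 → ℝ) (x : Fin 2 → ℤ) : ℝ := p 0 * x 0 + p 1 * x 1

/-- The maximizer set `D_f(p)`. -/
def maximizerSet (Φ : ℤ) (f : (Fin 2 → ℤ) → ℝ) (p : Fin 2 → ℝ) : Set (Fin 2 → ℤ) :=
  {x | x ∈ TPhi Φ ∧ ∀ y ∈ TPhi Φ, f y - inner2 p y ≤ f x - inner2 p x}

/-- A subset of `ℤ²` is two-dimensional if it is not contained in any affine line of `ℝ²`. -/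
def TwoDimensional (S : Set (Fin 2 → ℤ)) : Prop :=
  ¬ ∃ a b c : ℝ, (a ≠ 0 ∨ b ≠ 0) ∧ ∀ x ∈ S, a * (x 0 : ℝ) + b * (x 1 : ℝ) = c

/-- Feasible assignments `y` for demand vector `x` and supplies `φ`. -/
def FeasibleAssign {V : Type} [Fintype V] (φ : V → ℤ) (x : Fin 2 → ℤ)
    (y : V → Fin 2 → ℤ) : Prop :=
  (∀ i j, 0 ≤ y i j) ∧ (∀ j, ∑ i, y i j = x j) ∧ (∀ i, y i 0 + y i 1 ≤ φ i)

/-- `f` is the assignment valuation represented by `(V, w, φ)`. -/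
def IsAssignmentValuation (Φ : ℤ) (f : (Fin 2 → ℤ) → ℝ) (V : Type) [Fintype V]
    (w : V → Fin 2 → ℝ) (φ : V → ℤ) : Prop :=
  (∀ i, 0 < φ i) ∧ (∑ i, φ i = Φ) ∧
  ∀ x ∈ TPhi Φ, IsGreatest
    {s : ℝ | ∃ y : V → Fin 2 → ℤ, FeasibleAssign φ x y ∧
       s = ∑ i, (w i 0 * (y i 0 : ℝ) + w i 1 * (y i 1 : ℝ))} (f x)

/-- A hexagonalization of `T_Φ`: nonempty M♮-convex sets covering `T_Φ` whose convex hulls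
have pairwise disjoint interiors. -/
def IsHexagonalization (Φ : ℤ) {q : ℕ} (H : Fin q → Set (Fin 2 → ℤ)) : Prop :=
  (∀ i, (H i).Nonempty) ∧ (∀ i, MnConvexSet (H i)) ∧ (⋃ i, H i) = TPhi Φ ∧
  ∀ i j : Fin q, i ≠ j →
    interior (convexHull ℝ (toR '' H i)) ∩ interior (convexHull ℝ (toR '' H j)) = ∅

/-- A feasible hexagonalization: every member is of positive- or zero-type, and at least one
member is of positive-type. -/
def IsFeasibleHex (Φ : ℤ) {q : ℕ} (H : Fin q → Set (Fin 2 → ℤ)) : Prop :=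
  IsHexagonalization Φ H ∧ (∀ i, 0 ≤ typeQ (H i)) ∧ ∃ i, 0 < typeQ (H i)

/-! Every integer point `z` of `conv(S)` satisfies each inequality `⟨c, z⟩ ≥ min_S ⟨c, ·⟩`, in
particular the six that bound `x¹`, `x²` and `x¹ + x²` from both sides. For `x ∈ S` with `x ≠ z`
these six bounds, fed into the exchange axiom, produce a point of `S` among `x ± χ_i` and
`x - χ_i + χ_j` that is strictly closer to `z` in the hexagonal distance
`|d¹| + |d²| + |d¹ + d²|`, `d = x - z`. Descending from any point of `S` therefore reaches `z`. -/

open scoped Pointwise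

def hexDist (z x : Fin 2 → ℤ) : ℕ :=
  (x 0 - z 0).natAbs + (x 1 - z 1).natAbs + (x 0 + x 1 - (z 0 + z 1)).natAbs

namespace MnConvexSet

variable {S : Set (Fin 2 → ℤ)} {i j : Fin 2} {x y u w : Fin 2 → ℤ}

theorem exchange (hM : MnConvexSet S) (hij : i ≠ j) (hx : x ∈ S) (hy : y ∈ S) (h : y i < x i) :
    (x - Pi.single i 1 ∈ S ∧ y + Pi.single i 1 ∈ S) ∨
      (x j < y j ∧ x - Pi.single i 1 + Pi.single j 1 ∈ S ∧ y + Pi.single i 1 - Pi.single j 1 ∈ S) := by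
  obtain ⟨_ | k, hk, hxk, hyk⟩ := hM x hx y hy i h
  · left
    simpa [chi] using And.intro hxk hyk
  · obtain rfl : k = j := by
      rcases eq_or_ne k i with rfl | hki
      · exact absurd (hk k rfl) h.not_gt
      · omega
    exact .inr ⟨hk k rfl, hxk, hyk⟩

theorem neg (hM : MnConvexSet S) : MnConvexSet (-S) := by
  intro x hx y hy i h
  obtain ⟨k, hk, hxk, hyk⟩ := hM (-y) hy (-x) hx i (by simpa using h)
  refine ⟨k, fun k' hk' => by simpa using hk k' hk', ?_, ?_⟩
  · rw [Set.mem_neg]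
    convert hyk using 1
    abel
  · rw [Set.mem_neg]
    convert hxk using 1
    abel

theorem sub_single_add_single_mem (hM : MnConvexSet S) (hij : i ≠ j) (hx : x ∈ S) (hy : y ∈ S)
    (hi : y i < x i) (hj : x j < y j) : x - Pi.single i 1 + Pi.single j 1 ∈ S := by
  rcases hM.exchange hij hx hy hi with ⟨hxi, -⟩ | ⟨-, h, -⟩
  · rcases hM.exchange hij.symm hy hx hj with ⟨-, hxj⟩ | ⟨-, -, h⟩
    · rcases hM.exchange hij hxj hxi (by simp [hij]) with ⟨h, -⟩ | ⟨hlt, -⟩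
      · convert h using 1
        abel
      · simp [hij] at hlt
    · convert h using 1
      abel
  · exact h

theorem sub_single_add_single_mem_of_witnesses (hM : MnConvexSet S) (hij : i ≠ j) (hx : x ∈ S)
    (hu : u ∈ S) (hw : w ∈ S) (hui : u i < x i) (hwj : x j < w j) :
    x - Pi.single i 1 + Pi.single j 1 ∈ S := by
  rcases lt_or_ge (x j) (u j) with huj | huj
  · exact hM.sub_single_add_single_mem hij hx hu hui huj
  obtain ⟨n, hn⟩ : ∃ n : ℕ, w i < x i + n := ⟨(w i - x i + 1).toNat, by omega⟩
  induction n generalizing w with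
  | zero => exact hM.sub_single_add_single_mem hij hx hw (by omega) hwj
  | succ n ih =>
    rcases lt_or_ge (w i) (x i) with hwi | hwi
    · exact hM.sub_single_add_single_mem hij hx hw hwi hwj
    rcases hM.exchange hij hw hu (by omega) with ⟨hw', -⟩ | ⟨hlt, -⟩
    · exact ih hw' (by simp [hij.symm, hwj]) (by simp; omega)
    · omega

theorem sub_single_mem_of_sum_lt (hM : MnConvexSet S) (hij : i ≠ j) (hx : x ∈ S) (hy : y ∈ S)
    (hi : y i < x i) (hs : y i + y j < x i + x j) : x - Pi.single i 1 ∈ S := by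
  obtain ⟨n, hn⟩ : ∃ n : ℕ, y j < x j + n := ⟨(y j - x j + 1).toNat, by omega⟩
  induction n generalizing y with
  | zero =>
    rcases hM.exchange hij hx hy hi with ⟨h, -⟩ | ⟨hlt, -⟩
    · exact h
    · omega
  | succ n ih =>
    rcases hM.exchange hij hx hy hi with ⟨h, -⟩ | ⟨hlt, -, hy'⟩
    · exact h
    · exact ih hy' (by simp [hij]; omega) (by simp [hij, hij.symm]; omega)
        (by simp [hij.symm]; omega)

theorem sub_single_mem_of_witnesses (hM : MnConvexSet S) (hij : i ≠ j) (hx : x ∈ S)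
    (hu : u ∈ S) (hy : y ∈ S) (hui : u i < x i) (hs : y i + y j < x i + x j) :
    x - Pi.single i 1 ∈ S := by
  obtain ⟨n, hn⟩ : ∃ n : ℕ, y i < x i + n := ⟨(y i - x i + 1).toNat, by omega⟩
  induction n generalizing y with
  | zero => exact hM.sub_single_mem_of_sum_lt hij hx hy (by omega) hs
  | succ n ih =>
    rcases lt_or_ge (y i) (x i) with hyi | hyi
    · exact hM.sub_single_mem_of_sum_lt hij hx hy hyi hs
    rcases hM.exchange hij hy hu (by omega) with ⟨hy', -⟩ | ⟨-, hy', -⟩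
    · exact ih hy' (by simp [hij.symm]; omega) (by simp; omega)
    · exact ih hy' (by simp [hij, hij.symm]; omega) (by simp [hij]; omega)

theorem add_single_mem_of_witnesses (hM : MnConvexSet S) (hij : i ≠ j) (hx : x ∈ S)
    (hu : u ∈ S) (hy : y ∈ S) (hui : x i < u i) (hs : x i + x j < y i + y j) :
    x + Pi.single i 1 ∈ S := by
  have h := hM.neg.sub_single_mem_of_witnesses hij (x := -x) (u := -u) (y := -y)
    (by simpa using hx) (by simpa using hu) (by simpa using hy) (by simpa using hui)
    (by simp; omega)
  rw [Set.mem_neg, neg_sub, sub_neg_eq_add] at h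
  rwa [add_comm]

theorem exists_hexDist_lt (hM : MnConvexSet S) {z : Fin 2 → ℤ}
    (hz : ∀ a b : ℤ, ∃ u ∈ S, a * u 0 + b * u 1 ≤ a * z 0 + b * z 1) (hx : x ∈ S) (hxz : x ≠ z) :
    ∃ x' ∈ S, hexDist z x' < hexDist z x := by
  obtain ⟨l₀, hl₀, hl₀z⟩ := hz 1 0
  obtain ⟨r₀, hr₀, hr₀z⟩ := hz (-1) 0
  obtain ⟨l₁, hl₁, hl₁z⟩ := hz 0 1
  obtain ⟨r₁, hr₁, hr₁z⟩ := hz 0 (-1)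
  obtain ⟨l, hl, hlz⟩ := hz 1 1
  obtain ⟨r, hr, hrz⟩ := hz (-1) (-1)
  have hne : x 0 ≠ z 0 ∨ x 1 ≠ z 1 := by
    by_contra! h
    exact hxz (funext (Fin.forall_fin_two.2 h))
  have h01 : (0 : Fin 2) ≠ 1 := by decide
  rcases (by omega : (z 0 < x 0 ∧ z 0 + z 1 < x 0 + x 1) ∨ (z 1 < x 1 ∧ z 0 + z 1 < x 0 + x 1) ∨
      (x 0 < z 0 ∧ x 0 + x 1 < z 0 + z 1) ∨ (x 1 < z 1 ∧ x 0 + x 1 < z 0 + z 1) ∨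
      (z 0 < x 0 ∧ x 1 < z 1) ∨ (x 0 < z 0 ∧ z 1 < x 1)) with
    h | h | h | h | h | h
  · exact ⟨_, hM.sub_single_mem_of_witnesses h01 hx hl₀ hl (by omega) (by omega),
      by simp [hexDist]; omega⟩
  · exact ⟨_, hM.sub_single_mem_of_witnesses h01.symm hx hl₁ hl (by omega) (by omega),
      by simp [hexDist]; omega⟩
  · exact ⟨_, hM.add_single_mem_of_witnesses h01 hx hr₀ hr (by omega) (by omega),
      by simp [hexDist]; omega⟩
  · exact ⟨_, hM.add_single_mem_of_witnesses h01.symm hx hr₁ hr (by omega) (by omega),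
      by simp [hexDist]; omega⟩
  · exact ⟨_, hM.sub_single_add_single_mem_of_witnesses h01 hx hl₀ hr₁ (by omega) (by omega),
      by simp [hexDist]; omega⟩
  · exact ⟨_, hM.sub_single_add_single_mem_of_witnesses h01.symm hx hl₁ hr₀ (by omega)
      (by omega), by simp [hexDist]; omega⟩

theorem mem_of_forall_exists_le (hM : MnConvexSet S) {z : Fin 2 → ℤ}
    (hz : ∀ a b : ℤ, ∃ u ∈ S, a * u 0 + b * u 1 ≤ a * z 0 + b * z 1) : z ∈ S := by
  obtain ⟨x, hx, -⟩ := hz 0 0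
  induction hd : hexDist z x using Nat.strong_induction_on generalizing x with
  | _ n ih =>
    by_cases hxz : x = z
    · exact hxz ▸ hx
    obtain ⟨x', hx', hlt⟩ := hM.exists_hexDist_lt hz hx hxz
    exact ih _ (hd ▸ hlt) x' hx' rfl

end MnConvexSet

theorem exists_mem_le_of_toR_mem_convexHull {S : Set (Fin 2 → ℤ)} {z : Fin 2 → ℤ}
    (hz : toR z ∈ convexHull ℝ (toR '' S)) (a b : ℤ) :
    ∃ u ∈ S, a * u 0 + b * u 1 ≤ a * z 0 + b * z 1 := by
  let f : (Fin 2 → ℝ) →ₗ[ℝ] ℝ := (a : ℝ) • LinearMap.proj 0 + (b : ℝ) • LinearMap.proj 1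
  obtain ⟨_, ⟨u, hu, rfl⟩, h⟩ :=
    (f.concaveOn convex_univ).exists_le_of_mem_convexHull (Set.subset_univ _) hz
  refine ⟨u, hu, ?_⟩
  simp only [f, LinearMap.add_apply, LinearMap.smul_apply, LinearMap.coe_proj, Function.eval, toR,
    smul_eq_mul] at h
  exact_mod_cast h

theorem stmt2_general (S : Set (Fin 2 → ℤ)) (hM : MnConvexSet S) :
    {x : Fin 2 → ℤ | toR x ∈ convexHull ℝ (toR '' S)} = S := by
  ext z
  exact ⟨fun hz => hM.mem_of_forall_exists_le (exists_mem_le_of_toR_mem_convexHull hz),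
    fun hz => subset_convexHull ℝ _ ⟨z, hz, rfl⟩⟩

theorem stmt2 (S : Set (Fin 2 → ℤ)) (hne : S.Nonempty) (hbd : BoundedSet S)
    (hM : MnConvexSet S) :
    {x : Fin 2 → ℤ | toR x ∈ convexHull ℝ (toR '' S)} = S :=
  stmt2_general S hM
end

section
/- Let S ⊆ ℤ² be a nonempty bounded M♮-convex set, and let λ₁ = min_{x∈S} x¹, μ₁ = max_{x∈S} x¹, λ₂ = min_{x∈S} x², μ₂ = max_{x∈S} x², λ₀ = min_{x∈S} (x¹+x²), μ₀ = max_{x∈S} (x¹+x²). Then conv(S), the convex hull of S in ℝ², is equal to the convex hull of the six points (λ₁, μ₂), (μ₀ − μ₂, μ₂), (μ₁, μ₀ − μ₁), (μ₁, λ₂), (λ₀ − λ₂, λ₂), (λ₁, λ₀ − λ₁). -/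
open Finset

/-!
Every point of `S` satisfies `λᵢ ≤ xⁱ ≤ μᵢ` and `λ₀ ≤ x¹ + x² ≤ μ₀`, and every such point of `ℝ²`
lies in the hexagon: on its horizontal line it sits between a point of the left boundary chain
and one of the right chain. Conversely each vertex of the hexagon is a point of `S`, e.g. a point
`x` maximizing `x²` among the minimizers of `x¹` maximizes `x²` over all of `S`: exchanging
`x` against a point `y` with `x² < y²` yields `x + χ₂ − χⱼ ∈ S` with `j ∈ {0, 1}`, which still
minimizes `x¹` and has a larger second coordinate.
-/

open Set

section Extremal

variable {α β γ : Type*} {S : Set α}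

theorem IsMinOn.csInf_image_eq [ConditionallyCompleteLattice β] {f : α → β} {x : α}
    (h : IsMinOn f S x) (hx : x ∈ S) : sInf (f '' S) = f x :=
  IsLeast.csInf_eq ⟨Set.mem_image_of_mem f hx, Set.forall_mem_image.2 (isMinOn_iff.1 h)⟩

theorem IsMaxOn.csSup_image_eq [ConditionallyCompleteLattice β] {f : α → β} {x : α}
    (h : IsMaxOn f S x) (hx : x ∈ S) : sSup (f '' S) = f x :=
  IsGreatest.csSup_eq ⟨Set.mem_image_of_mem f hx, Set.forall_mem_image.2 (isMaxOn_iff.1 h)⟩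

theorem Set.Finite.csInf_image_le [ConditionallyCompleteLinearOrder β] (hS : S.Finite) {x : α}
    (hx : x ∈ S) (f : α → β) : sInf (f '' S) ≤ f x :=
  csInf_le (hS.image f).bddBelow (mem_image_of_mem f hx)

theorem Set.Finite.le_csSup_image [ConditionallyCompleteLinearOrder β] (hS : S.Finite) {x : α}
    (hx : x ∈ S) (f : α → β) : f x ≤ sSup (f '' S) :=
  le_csSup (hS.image f).bddAbove (mem_image_of_mem f hx)

theorem Set.Finite.exists_isMinOn_isMaxOn [LinearOrder β] [LinearOrder γ] (hS : S.Finite)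
    (hne : S.Nonempty) (f : α → β) (g : α → γ)
    (step : ∀ x ∈ S, IsMinOn f S x → ∀ y ∈ S, g x < g y → ∃ z ∈ S, f z ≤ f x ∧ g x < g z) :
    ∃ x ∈ S, IsMinOn f S x ∧ IsMaxOn g S x := by
  obtain ⟨x₀, hx₀, hmin₀⟩ := exists_min_image S f hS hne
  obtain ⟨x, ⟨hx, hmin⟩, hmax⟩ := exists_max_image {x ∈ S | IsMinOn f S x} g
    (hS.subset (sep_subset _ _)) ⟨x₀, hx₀, isMinOn_iff.2 hmin₀⟩
  refine ⟨x, hx, hmin, isMaxOn_iff.2 fun y hy => ?_⟩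
  by_contra! hlt
  obtain ⟨z, hz, hfz, hgz⟩ := step x hx hmin y hy hlt
  have hzmin : IsMinOn f S z := isMinOn_iff.2 fun w hw => hfz.trans (isMinOn_iff.1 hmin w hw)
  exact (hmax z ⟨hz, hzmin⟩).not_gt hgz

end Extremal

theorem BoundedSet.finite {S : Set (Fin 2 → ℤ)} (h : BoundedSet S) : S.Finite := by
  obtain ⟨M, hM⟩ := h
  refine (Set.Finite.pi (t := fun _ => Icc (-M) M) fun _ => Set.finite_Icc _ _).subset
    fun x hx => ?_
  simp only [mem_pi, mem_univ, forall_const, Fin.forall_fin_two, Set.mem_Icc]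
  exact ⟨abs_le.1 (hM x hx).1, abs_le.1 (hM x hx).2⟩

theorem toR_eq_vecCons (x : Fin 2 → ℤ) : toR x = ![(x 0 : ℝ), (x 1 : ℝ)] := by
  ext i; fin_cases i <;> rfl

namespace MnConvexSet

variable {S : Set (Fin 2 → ℤ)} {x y : Fin 2 → ℤ}

theorem exists_succ_mem (hM : MnConvexSet S) (hx : x ∈ S) (hy : y ∈ S) (i : Fin 2)
    (h : x i < y i) :
    ∃ z ∈ S, z i = x i + 1 ∧ (∀ k ≠ i, z k ≤ x k) ∧ x 0 + x 1 ≤ z 0 + z 1 := by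
  obtain ⟨j, hj, -, hmem⟩ := hM y hy x hx i h
  refine ⟨_, hmem, ?_⟩
  rcases j with _ | k
  · fin_cases i <;> simp [chi, Fin.forall_fin_two]
  · have hki : k ≠ i := by rintro rfl; exact (hj k rfl).not_gt h
    fin_cases i <;> fin_cases k <;> simp_all [chi, Fin.forall_fin_two]

theorem exists_pred_mem (hM : MnConvexSet S) (hx : x ∈ S) (hy : y ∈ S) (i : Fin 2)
    (h : y i < x i) :
    ∃ z ∈ S, z i = x i - 1 ∧ (∀ k ≠ i, x k ≤ z k) ∧ z 0 + z 1 ≤ x 0 + x 1 := by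
  obtain ⟨j, hj, hmem, -⟩ := hM x hx y hy i h
  refine ⟨_, hmem, ?_⟩
  rcases j with _ | k
  · fin_cases i <;> simp [chi, Fin.forall_fin_two]
  · have hki : k ≠ i := by rintro rfl; exact (hj k rfl).not_gt h
    fin_cases i <;> fin_cases k <;> simp_all [chi, Fin.forall_fin_two]

theorem exists_mem_lam1_mu2 (hM : MnConvexSet S) (hS : S.Finite) (hne : S.Nonempty) :
    ∃ x ∈ S, x 0 = lam1 S ∧ x 1 = mu2 S := by
  obtain ⟨x, hx, hmin, hmax⟩ := hS.exists_isMinOn_isMaxOn hne (· 0) (· 1)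
    fun x hx _ y hy hlt => by
      obtain ⟨z, hz, h1, h0, -⟩ := hM.exists_succ_mem hx hy 1 hlt
      exact ⟨z, hz, h0 0 (by decide), by omega⟩
  exact ⟨x, hx, (hmin.csInf_image_eq hx).symm, (hmax.csSup_image_eq hx).symm⟩

theorem exists_mem_mu0_sub_mu2_mu2 (hM : MnConvexSet S) (hS : S.Finite) (hne : S.Nonempty) :
    ∃ x ∈ S, x 0 = mu0 S - mu2 S ∧ x 1 = mu2 S := by
  obtain ⟨x, hx, hmin, hmax⟩ := hS.exists_isMinOn_isMaxOn hne (fun x => -(x 0 + x 1)) (· 1)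
    fun x hx _ y hy hlt => by
      obtain ⟨z, hz, h1, -, hsum⟩ := hM.exists_succ_mem hx hy 1 hlt
      exact ⟨z, hz, neg_le_neg hsum, by omega⟩
  have hsum : x 0 + x 1 = mu0 S := by simpa [mu0] using (hmin.neg.csSup_image_eq hx).symm
  have h1 : x 1 = mu2 S := (hmax.csSup_image_eq hx).symm
  exact ⟨x, hx, by omega, h1⟩

theorem exists_mem_mu1_mu0_sub_mu1 (hM : MnConvexSet S) (hS : S.Finite) (hne : S.Nonempty) :
    ∃ x ∈ S, x 0 = mu1 S ∧ x 1 = mu0 S - mu1 S := by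
  obtain ⟨x, hx, hmin, hmax⟩ := hS.exists_isMinOn_isMaxOn hne (fun x => -(x 0 + x 1)) (· 0)
    fun x hx _ y hy hlt => by
      obtain ⟨z, hz, h0, -, hsum⟩ := hM.exists_succ_mem hx hy 0 hlt
      exact ⟨z, hz, neg_le_neg hsum, by omega⟩
  have hsum : x 0 + x 1 = mu0 S := by simpa [mu0] using (hmin.neg.csSup_image_eq hx).symm
  have h0 : x 0 = mu1 S := (hmax.csSup_image_eq hx).symm
  exact ⟨x, hx, h0, by omega⟩

theorem exists_mem_mu1_lam2 (hM : MnConvexSet S) (hS : S.Finite) (hne : S.Nonempty) :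
    ∃ x ∈ S, x 0 = mu1 S ∧ x 1 = lam2 S := by
  obtain ⟨x, hx, hmin, hmax⟩ := hS.exists_isMinOn_isMaxOn hne (· 1) (· 0)
    fun x hx _ y hy hlt => by
      obtain ⟨z, hz, h0, h1, -⟩ := hM.exists_succ_mem hx hy 0 hlt
      exact ⟨z, hz, h1 1 (by decide), by omega⟩
  exact ⟨x, hx, (hmax.csSup_image_eq hx).symm, (hmin.csInf_image_eq hx).symm⟩

theorem exists_mem_lam0_sub_lam2_lam2 (hM : MnConvexSet S) (hS : S.Finite) (hne : S.Nonempty) :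
    ∃ x ∈ S, x 0 = lam0 S - lam2 S ∧ x 1 = lam2 S := by
  obtain ⟨x, hx, hmin, hmax⟩ := hS.exists_isMinOn_isMaxOn hne (fun x => x 0 + x 1) (- · 1)
    fun x hx _ y hy hlt => by
      obtain ⟨z, hz, h1, -, hsum⟩ := hM.exists_pred_mem hx hy 1 (neg_lt_neg_iff.1 hlt)
      exact ⟨z, hz, hsum, by omega⟩
  have hsum : x 0 + x 1 = lam0 S := (hmin.csInf_image_eq hx).symm
  have h1 : x 1 = lam2 S := by simpa [lam2] using (hmax.neg.csInf_image_eq hx).symm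
  exact ⟨x, hx, by omega, h1⟩

theorem exists_mem_lam1_lam0_sub_lam1 (hM : MnConvexSet S) (hS : S.Finite) (hne : S.Nonempty) :
    ∃ x ∈ S, x 0 = lam1 S ∧ x 1 = lam0 S - lam1 S := by
  obtain ⟨x, hx, hmin, hmax⟩ := hS.exists_isMinOn_isMaxOn hne (fun x => x 0 + x 1) (- · 0)
    fun x hx _ y hy hlt => by
      obtain ⟨z, hz, h0, -, hsum⟩ := hM.exists_pred_mem hx hy 0 (neg_lt_neg_iff.1 hlt)
      exact ⟨z, hz, hsum, by omega⟩
  have hsum : x 0 + x 1 = lam0 S := (hmin.csInf_image_eq hx).symm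
  have h0 : x 0 = lam1 S := by simpa [lam1] using (hmax.neg.csInf_image_eq hx).symm
  exact ⟨x, hx, h0, by omega⟩

end MnConvexSet

theorem vecCons_mem_segment {l r θ : ℝ} (hl : l ≤ θ) (hr : θ ≤ r) (α β γ δ : ℝ) :
    ![α + β * θ, γ + δ * θ] ∈ segment ℝ ![α + β * l, γ + δ * l] ![α + β * r, γ + δ * r] := by
  obtain ⟨a, b, ha, hb, hab, rfl⟩ := Icc_subset_segment (𝕜 := ℝ) ⟨hl, hr⟩
  refine ⟨a, b, ha, hb, hab, ?_⟩
  ext i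
  fin_cases i <;> simp only [Matrix.smul_cons, smul_eq_mul, Matrix.smul_empty, Fin.zero_eta,
    Fin.mk_one, Fin.isValue, Pi.add_apply, Matrix.cons_val_zero, Matrix.cons_val_one,
    Matrix.cons_val_fin_one]
  · linear_combination α * hab
  · linear_combination γ * hab

/-- The hexagon with sides on the lines `x¹ = l₁, u₁`, `x² = l₂, u₂` and `x¹ + x² = l₀, u₀`. -/
def hexagon (l₁ u₁ l₂ u₂ l₀ u₀ : ℝ) : Set (Fin 2 → ℝ) :=
  {![l₁, u₂], ![u₀ - u₂, u₂], ![u₁, u₀ - u₁], ![u₁, l₂], ![l₀ - l₂, l₂], ![l₁, l₀ - l₁]}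

section Hexagon

variable {l₁ u₁ l₂ u₂ l₀ u₀ s t : ℝ}

theorem exists_le_mem_convexHull_hexagon (hs : l₁ ≤ s) (ht : l₂ ≤ t) (ht' : t ≤ u₂)
    (hst : l₀ ≤ s + t) : ∃ l ≤ s, ![l, t] ∈ convexHull ℝ (hexagon l₁ u₁ l₂ u₂ l₀ u₀) := by
  rcases le_or_gt (l₀ - l₁) t with h | h
  · refine ⟨l₁, hs, segment_subset_convexHull ?_ ?_
      (by simpa using vecCons_mem_segment h ht' l₁ 0 0 1)⟩ <;> simp [hexagon]
  · refine ⟨l₀ - t, by linarith, segment_subset_convexHull ?_ ?_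
      (by simpa [← sub_eq_add_neg] using vecCons_mem_segment ht h.le l₀ (-1) 0 1)⟩ <;>
      simp [hexagon]

theorem exists_ge_mem_convexHull_hexagon (hs : s ≤ u₁) (ht : l₂ ≤ t) (ht' : t ≤ u₂)
    (hst : s + t ≤ u₀) : ∃ r ≥ s, ![r, t] ∈ convexHull ℝ (hexagon l₁ u₁ l₂ u₂ l₀ u₀) := by
  rcases le_or_gt t (u₀ - u₁) with h | h
  · refine ⟨u₁, hs, segment_subset_convexHull ?_ ?_
      (by simpa using vecCons_mem_segment ht h u₁ 0 0 1)⟩ <;> simp [hexagon]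
  · refine ⟨u₀ - t, by linarith, segment_subset_convexHull ?_ ?_
      (by simpa [← sub_eq_add_neg] using vecCons_mem_segment h.le ht' u₀ (-1) 0 1)⟩ <;>
      simp [hexagon]

theorem vecCons_mem_convexHull_hexagon (hs : l₁ ≤ s) (hs' : s ≤ u₁) (ht : l₂ ≤ t)
    (ht' : t ≤ u₂) (hst : l₀ ≤ s + t) (hst' : s + t ≤ u₀) :
    ![s, t] ∈ convexHull ℝ (hexagon l₁ u₁ l₂ u₂ l₀ u₀) := by
  obtain ⟨l, hl, hlV⟩ := exists_le_mem_convexHull_hexagon hs ht ht' hst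
  obtain ⟨r, hr, hrV⟩ := exists_ge_mem_convexHull_hexagon (l₁ := l₁) (l₀ := l₀) hs' ht ht' hst'
  exact (convex_convexHull ℝ _).segment_subset hlV hrV
    (by simpa using vecCons_mem_segment hl hr 0 1 t 0)

end Hexagon

theorem vecCons_mem_image_toR {S : Set (Fin 2 → ℤ)} {a b : ℤ} (h : ∃ x ∈ S, x 0 = a ∧ x 1 = b) :
    ![(a : ℝ), b] ∈ toR '' S := by
  obtain ⟨x, hx, rfl, rfl⟩ := h
  exact ⟨x, hx, toR_eq_vecCons x⟩

theorem MnConvexSet.convexHull_image_toR {S : Set (Fin 2 → ℤ)} (hM : MnConvexSet S)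
    (hS : S.Finite) (hne : S.Nonempty) :
    convexHull ℝ (toR '' S) =
      convexHull ℝ (hexagon (lam1 S) (mu1 S) (lam2 S) (mu2 S) (lam0 S) (mu0 S)) := by
  refine (convexHull_min ?_ (convex_convexHull ℝ _)).antisymm (convexHull_mono ?_)
  · rintro _ ⟨x, hx, rfl⟩
    rw [toR_eq_vecCons]
    refine vecCons_mem_convexHull_hexagon ?_ ?_ ?_ ?_ ?_ ?_ <;> norm_cast
    exacts [hS.csInf_image_le hx (· 0), hS.le_csSup_image hx (· 0),
      hS.csInf_image_le hx (· 1), hS.le_csSup_image hx (· 1),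
      hS.csInf_image_le hx (fun x => x 0 + x 1), hS.le_csSup_image hx (fun x => x 0 + x 1)]
  · simp only [hexagon, Set.insert_subset_iff, Set.singleton_subset_iff]
    refine ⟨?_, ?_, ?_, ?_, ?_, ?_⟩ <;> norm_cast
    exacts [vecCons_mem_image_toR (hM.exists_mem_lam1_mu2 hS hne),
      vecCons_mem_image_toR (hM.exists_mem_mu0_sub_mu2_mu2 hS hne),
      vecCons_mem_image_toR (hM.exists_mem_mu1_mu0_sub_mu1 hS hne),
      vecCons_mem_image_toR (hM.exists_mem_mu1_lam2 hS hne),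
      vecCons_mem_image_toR (hM.exists_mem_lam0_sub_lam2_lam2 hS hne),
      vecCons_mem_image_toR (hM.exists_mem_lam1_lam0_sub_lam1 hS hne)]

theorem stmt3 (S : Set (Fin 2 → ℤ)) (hne : S.Nonempty) (hbd : BoundedSet S)
    (hM : MnConvexSet S) :
    convexHull ℝ (toR '' S) =
      convexHull ℝ
        ({![(lam1 S : ℝ), (mu2 S : ℝ)],
          ![((mu0 S - mu2 S : ℤ) : ℝ), (mu2 S : ℝ)],
          ![(mu1 S : ℝ), ((mu0 S - mu1 S : ℤ) : ℝ)],
          ![(mu1 S : ℝ), (lam2 S : ℝ)],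
          ![((lam0 S - lam2 S : ℤ) : ℝ), (lam2 S : ℝ)],
          ![(lam1 S : ℝ), ((lam0 S - lam1 S : ℤ) : ℝ)]} : Set (Fin 2 → ℝ)) := by
  push_cast
  exact hM.convexHull_image_toR hbd.finite hne
end
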